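/- Let k ≥ 1 and let v : Fin k → ℕ satisfy v i ≥ 1 for all i and gcd(v 1, …, v k) = 1; set V = Σ_i v i, and for m ≥ 1 let N_{v,m} be the number of rotation-equivalence classes of words of length V·m over Fin k having exactly v i · m occurrences of each letter i. For every real x with 0 < x < 1 and x^V · V^V < ∏_i (v i)^{v i}, both series below converge and Σ_{m≥1} (V·m) · N_{v,m} · x^{V·m} = Σ_{n≥1} φ(n) · ( Σ_{p≥1} ((V·p)!/∏_i (v i · p)!) · x^{V·n·p} ). (Analytic form of the isomorphism ΘCyc_v ≅ Σ_{n>0} φ(n) Rep_n(Seq_v): C•_v(x) = Σ_{n≥1} φ(n) S⁺_v(x^n).) -/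

import Mathlib

/-
Burnside's lemma for the rotation action of `ℤ/Vm` on `v`-balanced words of length `Vm` gives
`Vm · N_m = ∑_{d ∣ Vm} φ(Vm/d) · #{balanced words of period d}`. A word of period `d` is a
word of length `d` repeated `Vm/d` times; since `gcd v = 1` it can only be balanced when `V ∣ d`,
and then there are `M_{d/V}` of them, where `M_p = (Vp)! / ∏ i, (v i · p)!` counts the balanced
words of length `Vp`. Hence `Vm · N_m = ∑_{n p = m} φ(n) M_p`, and the generating-function
identity is this identity weighted by `x^{Vm}`: a regrouping of the double series
`∑_{n,p} φ(n) M_p x^{Vnp}` along `n p = m`. That series converges absolutely because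
`M_p x^{Vp} ≤ q^p` with `q = x^V V^V / ∏ i, (v i)^(v i) < 1`, as `M_p ∏ i, (v i)^(v i · p)`
is a single term of the multinomial expansion of `V^{Vp}`.
-/

/-- The rotation of a word `w : Fin L → A` by `r` positions. -/
def rotate {L : ℕ} {A : Type*} (r : ℕ) (w : Fin L → A) : Fin L → A :=
  fun i => w ⟨((i : ℕ) + r) % L, Nat.mod_lt _ (Nat.lt_of_le_of_lt (Nat.zero_le _) i.isLt)⟩

/-- Rotation-equivalence of words: `w'` is a rotation of `w`. -/
def rotEquiv {L : ℕ} {A : Type*} (w w' : Fin L → A) : Prop :=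
  ∃ r : ℕ, w' = rotate r w

open Finset
open scoped Nat

section Rotation

variable {L : ℕ} {A : Type*}

theorem rotate_zero (w : Fin L → A) : rotate 0 w = w := by
  funext i
  simp [rotate, Nat.mod_eq_of_lt i.isLt]

theorem rotate_rotate (r s : ℕ) (w : Fin L → A) : rotate r (rotate s w) = rotate (r + s) w := by
  funext i
  simp only [rotate, Nat.mod_add_mod, Nat.add_assoc]

theorem rotate_mod (r : ℕ) (w : Fin L → A) : rotate (r % L) w = rotate r w := by
  funext i
  simp only [rotate, Nat.add_mod_mod]

theorem rotate_self (w : Fin L → A) : rotate L w = w := by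
  rw [← rotate_mod, Nat.mod_self, rotate_zero]

theorem rotate_mul_eq_self {r : ℕ} {w : Fin L → A} (h : rotate r w = w) (q : ℕ) :
    rotate (r * q) w = w := by
  induction q with
  | zero => exact rotate_zero w
  | succ q ih => rw [Nat.mul_succ, ← rotate_rotate, h, ih]

theorem rotate_eq_self_iff_gcd (r : ℕ) (w : Fin L → A) :
    rotate r w = w ↔ rotate (L.gcd r) w = w := by
  refine ⟨fun h => ?_, fun h => ?_⟩
  · rcases Nat.eq_zero_or_pos L with rfl | hL
    · exact Subsingleton.elim _ _
    rcases (Nat.gcd_le_left r hL).lt_or_eq with hlt | heq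
    · obtain ⟨q, -, hq⟩ := Nat.exists_mul_mod_eq_gcd (Nat.gcd_comm L r ▸ hlt)
      rw [Nat.gcd_comm, ← hq, rotate_mod, rotate_mul_eq_self h]
    · rw [heq, rotate_self]
  · obtain ⟨q, hq⟩ := Nat.gcd_dvd_right L r
    rw [hq]
    exact rotate_mul_eq_self h q

theorem rotEquiv_iff_exists_fin [NeZero L] {w w' : Fin L → A} :
    rotEquiv w w' ↔ ∃ c : Fin L, rotate c w = w' := by
  refine ⟨fun ⟨r, hr⟩ => ⟨Fin.ofNat L r, ?_⟩, fun ⟨c, hc⟩ => ⟨c, hc.symm⟩⟩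
  rw [Fin.val_ofNat, rotate_mod, hr]

end Rotation

section Periodic

variable {L d : ℕ} {A : Type*}

theorem rotate_eq_self_iff_eq_mod (hd : d ∣ L) {w : Fin L → A} :
    rotate d w = w ↔ ∀ j : Fin L, w j = w ⟨j % d, (Nat.mod_le _ _).trans_lt j.isLt⟩ := by
  refine ⟨fun h j => ?_, fun h => funext fun j => ?_⟩
  · have hj :=
      congrFun (rotate_mul_eq_self h (j / d)) ⟨j % d, (Nat.mod_le _ _).trans_lt j.isLt⟩
    simp only [rotate, Nat.mod_add_div, Nat.mod_eq_of_lt j.isLt] at hj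
    exact hj
  · rw [rotate, h, h j]
    simp only [Nat.mod_mod_of_dvd _ hd, Nat.add_mod_right]

def periodicWordEquiv (hL : 0 < L) (hd : d ∣ L) :
    {w : Fin L → A // rotate d w = w} ≃ (Fin d → A) where
  toFun w t := w.1 (Fin.castLE (Nat.le_of_dvd hL hd) t)
  invFun u := ⟨fun j => u ⟨j % d, Nat.mod_lt _ (Nat.pos_of_dvd_of_pos hd hL)⟩, by
    rw [rotate_eq_self_iff_eq_mod hd]
    intro j
    simp only [Nat.mod_mod]⟩
  left_inv w := by
    ext j
    exact ((rotate_eq_self_iff_eq_mod hd).1 w.2 j).symm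
  right_inv u := by
    ext t
    simp [Nat.mod_eq_of_lt t.isLt]

theorem card_filter_comp_mod [DecidableEq A] (hd : d ∣ L) (hd0 : 0 < d) (u : Fin d → A)
    (a : A) :
    #{j : Fin L | u ⟨j % d, Nat.mod_lt _ hd0⟩ = a} = L / d * #{t | u t = a} := by
  let e : Fin (L / d) × Fin d ≃ Fin L := finProdFinEquiv.trans (finCongr (Nat.div_mul_cancel hd))
  have hcard : #{p : Fin (L / d) × Fin d | u p.2 = a} =
      #{j : Fin L | u ⟨j % d, Nat.mod_lt _ hd0⟩ = a} :=
    Finset.card_equiv e fun p => by simp [e, Nat.add_mul_mod_self_left, Nat.mod_eq_of_lt p.2.isLt]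
  rw [← hcard, ← univ_product_univ, filter_product_right (fun t => u t = a), card_product,
    card_univ, Fintype.card_fin]

end Periodic

section LetterCounts

open Equiv

variable {α ι : Type*} [Fintype α] [DecidableEq ι]

theorem exists_card_filter_eq [Fintype ι] (c : ι → ℕ) (hc : ∑ i, c i = Fintype.card α) :
    ∃ w : α → ι, ∀ i, #{a | w a = i} = c i := by
  have e : α ≃ Σ i, Fin (c i) := Fintype.equivOfCardEq (by simp [hc])
  refine ⟨fun a => (e a).1, fun i => ?_⟩
  rw [← Fintype.card_subtype, Fintype.card_congr
    ((e.subtypeEquiv fun a => Iff.rfl).trans (Equiv.sigmaSubtype i)), Fintype.card_fin]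

theorem card_filter_comp_perm (w : α → ι) (σ : Perm α) (i : ι) :
    #{a | w (σ a) = i} = #{a | w a = i} :=
  Finset.card_equiv σ (by simp)

theorem card_words_with_counts [DecidableEq α] [Fintype ι] (c : ι → ℕ)
    (hc : ∑ i, c i = Fintype.card α) :
    Nat.card {w : α → ι // ∀ i, #{a | w a = i} = c i} = Nat.multinomial univ c := by
  obtain ⟨w₀, hw₀⟩ := exists_card_filter_eq c hc
  have horbit : MulAction.orbit (Perm α)ᵈᵐᵃ w₀ = {w | ∀ i, #{a | w a = i} = c i} := by
    ext w
    simp only [MulAction.mem_orbit_iff, Set.mem_ofPred_eq]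
    constructor
    · rintro ⟨σ, rfl⟩ i
      rw [← hw₀ i, ← card_filter_comp_perm w₀ (DomMulAct.mk.symm σ)]
      rfl
    · intro hw
      have hfiber i : Fintype.card {a // w a = i} = Fintype.card {a // w₀ a = i} := by
        rw [Fintype.card_subtype, Fintype.card_subtype, hw, hw₀]
      let σ := Equiv.ofFiberEquiv fun i => Fintype.equivOfCardEq (hfiber i)
      exact ⟨DomMulAct.mk σ, funext fun a => Equiv.ofFiberEquiv_map _ a⟩
  have hstab : Nat.card (MulAction.stabilizer (Perm α)ᵈᵐᵃ w₀) = ∏ i, (c i)! := by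
    rw [Nat.card_congr (subtypeEquiv (q := fun σ : Perm α => w₀ ∘ σ = w₀) DomMulAct.mk.symm
      fun _ => DomMulAct.mem_stabilizer_iff),
      Nat.card_eq_fintype_card, DomMulAct.stabilizer_card]
    simp_rw [Fintype.card_subtype, hw₀]
  have key := (MulAction.stabilizer (Perm α)ᵈᵐᵃ w₀).card_mul_index
  rw [MulAction.index_stabilizer, horbit, hstab, Nat.card_congr DomMulAct.mk.symm,
    Nat.card_perm, Nat.card_eq_fintype_card, ← hc, ← Nat.multinomial_spec] at key
  rw [← Nat.card_coe_set_eq] at key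
  exact Nat.eq_of_mul_eq_mul_left (by positivity) key

end LetterCounts

theorem Nat.sum_range_gcd_eq_sum_divisors {M : Type*} [AddCommMonoid M] (n : ℕ) (f : ℕ → M) :
    ∑ r ∈ range n, f (n.gcd r) = ∑ d ∈ n.divisors, φ (n / d) • f d := by
  rw [← sum_fiberwise_of_maps_to (g := n.gcd) (t := n.divisors)
    fun r hr => Nat.mem_divisors.2 ⟨Nat.gcd_dvd_left n r, by grind⟩]
  refine sum_congr rfl fun d hd => ?_
  rw [Nat.totient_div_of_dvd (Nat.dvd_of_mem_divisors hd), ← sum_const]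
  exact sum_congr rfl fun r hr => by rw [(mem_filter.1 hr).2]

section Necklaces

variable {L : ℕ} [NeZero L] {A : Type*}

abbrev rotationAddAction (P : (Fin L → A) → Prop) (hP : ∀ r w, P w → P (rotate r w)) :
    AddAction (Fin L) {w // P w} where
  vadd c w := ⟨rotate c w.1, hP _ _ w.2⟩
  zero_vadd w := Subtype.ext (rotate_zero w.1)
  add_vadd c c' w := Subtype.ext <| by
    change rotate (c + c' : Fin L) w.1 = rotate c (rotate c' w.1)
    rw [rotate_rotate, Fin.val_add, rotate_mod]

theorem mul_card_quot_rotEquiv [Finite A] (P : (Fin L → A) → Prop)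
    (hP : ∀ r w, P w → P (rotate r w)) :
    L * Nat.card (Quot fun w w' : {w // P w} => rotEquiv w.1 w'.1) =
      ∑ d ∈ L.divisors, φ (L / d) * Nat.card {w // P w ∧ rotate d w = w} := by
  classical
  let := rotationAddAction P hP
  have := Fintype.ofFinite {w // P w}
  have hrel : (fun w w' : {w // P w} => rotEquiv w.1 w'.1) = (AddAction.orbitRel (Fin L) _).r := by
    ext w w'
    rw [rotEquiv_iff_exists_fin, Setoid.comm', AddAction.orbitRel_apply, AddAction.mem_orbit_iff]
    simp only [Subtype.ext_iff]
    rfl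
  have hfix (c : Fin L) : Fintype.card (AddAction.fixedBy {w // P w} c) =
      Nat.card {w // P w ∧ rotate (L.gcd c) w = w} := by
    rw [← Nat.card_eq_fintype_card,
      ← Nat.card_congr (Equiv.subtypeSubtypeEquivSubtypeInter _ _)]
    refine Nat.card_congr (Equiv.subtypeEquivRight fun w => ?_)
    rw [AddAction.mem_fixedBy, ← rotate_eq_self_iff_gcd, Subtype.ext_iff]
    rfl
  have burnside := AddAction.sum_card_fixedBy_eq_card_orbits_mul_card_addGroup (Fin L) {w // P w}
  simp only [hfix, ← Nat.card_eq_fintype_card, Nat.card_fin] at burnside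
  rw [hrel, mul_comm]
  change Nat.card (Quotient (AddAction.orbitRel (Fin L) {w // P w})) * L = _
  rw [← burnside,
    Fin.sum_univ_eq_sum_range (fun r => Nat.card {w // P w ∧ rotate (L.gcd r) w = w}),
    Nat.sum_range_gcd_eq_sum_divisors L fun d => Nat.card {w // P w ∧ rotate d w = w}]
  rfl

end Necklaces

section PeriodicCounts

variable {L d : ℕ} {A : Type*} [DecidableEq A]

theorem card_filter_rotate [NeZero L] (r : ℕ) (w : Fin L → A) (a : A) :
    #{j | rotate r w j = a} = #{j | w j = a} := by
  have hw : rotate r w = fun j => w (Equiv.addRight (Fin.ofNat L r) j) := by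
    funext j
    simp only [rotate, Equiv.coe_addRight]
    congr 1
    ext
    simp [Fin.val_add, Nat.add_mod_mod]
  rw [hw, card_filter_comp_perm]

theorem card_periodic_words_with_counts (hL : 0 < L) (hd : d ∣ L) (c : A → ℕ) :
    Nat.card {w : Fin L → A // (∀ a, #{j | w j = a} = c a) ∧ rotate d w = w} =
      Nat.card {u : Fin d → A // ∀ a, L / d * #{t | u t = a} = c a} := by
  have hd0 : 0 < d := Nat.pos_of_dvd_of_pos hd hL
  let e := periodicWordEquiv (A := A) hL hd
  have hcount (w : {w : Fin L → A // rotate d w = w}) (a : A) :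
      #{j | w.1 j = a} = L / d * #{t | e w t = a} := by
    rw [← card_filter_comp_mod hd hd0]
    refine congrArg card (filter_congr fun j _ => ?_)
    rw [(rotate_eq_self_iff_eq_mod hd).1 w.2 j]
    rfl
  refine Nat.card_congr <| (Equiv.subtypeEquivRight fun w => and_comm).trans <|
    (Equiv.subtypeSubtypeEquivSubtypeInter _ _).symm.trans <|
    e.subtypeEquiv fun w => by simp only [hcount]

end PeriodicCounts

section Balanced

variable {ι : Type*} [Fintype ι] {v : ι → ℕ} {V : ℕ}

theorem sum_pos_of_gcd_eq_one (hgcd : univ.gcd v = 1) : 0 < ∑ i, v i := by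
  refine Nat.pos_of_ne_zero fun h0 => ?_
  rw [sum_eq_zero_iff] at h0
  rw [gcd_eq_zero_iff.2 h0] at hgcd
  exact zero_ne_one hgcd

theorem scaled_counts_iff (hgcd : univ.gcd v = 1) (hV0 : 0 < V) {m d q : ℕ} (hm : 0 < m)
    (hdq : d * q = V * m) (x : ι → ℕ) :
    (∀ i, q * x i = v i * m) ↔ V ∣ d ∧ ∀ i, x i = v i * (d / V) := by
  constructor
  · intro h
    have hx i : V * x i = d * v i := by
      refine Nat.eq_of_mul_eq_mul_left hm ?_
      calc m * (V * x i) = d * (q * x i) := by rw [← mul_assoc d, hdq]; ring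
        _ = m * (d * v i) := by rw [h]; ring
    have hVd : V ∣ d := by
      have := Finset.dvd_gcd fun i (_ : i ∈ univ) => Dvd.intro _ (hx i)
      rwa [Finset.gcd_mul_left, hgcd, normalize_eq, mul_one] at this
    refine ⟨hVd, fun i => Nat.eq_of_mul_eq_mul_left hV0 ?_⟩
    obtain ⟨p, rfl⟩ := hVd
    rw [hx, Nat.mul_div_cancel_left _ hV0]
    ring
  · rintro ⟨⟨p, rfl⟩, hx⟩ i
    have hpq : p * q = m := by
      refine Nat.eq_of_mul_eq_mul_left hV0 ?_
      rw [← hdq, mul_assoc]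
    rw [hx, Nat.mul_div_cancel_left _ hV0, ← hpq]
    ring

theorem card_periodic_balanced_words [DecidableEq ι] (hgcd : univ.gcd v = 1) (hV : V = ∑ i, v i)
    {m d : ℕ} (hm : 0 < m) (hd : d ∣ V * m) :
    Nat.card {w : Fin (V * m) → ι // (∀ i, #{j | w j = i} = v i * m) ∧ rotate d w = w} =
      if V ∣ d then Nat.multinomial univ (fun i => v i * (d / V)) else 0 := by
  have hV0 := hV ▸ sum_pos_of_gcd_eq_one hgcd
  rw [card_periodic_words_with_counts (by positivity) hd, Nat.card_congr
    (Equiv.subtypeEquivRight fun u => scaled_counts_iff hgcd hV0 hm (Nat.mul_div_cancel' hd) _)]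
  split_ifs with hVd
  · rw [Nat.card_congr (Equiv.subtypeEquivRight fun u => and_iff_right hVd),
      card_words_with_counts]
    rw [← sum_mul, ← hV, Nat.mul_div_cancel' hVd, Fintype.card_fin]
  · exact Nat.card_eq_zero.2 (Or.inl ⟨fun u => hVd u.2.1⟩)

theorem Nat.sum_divisors_filter_dvd {M : Type*} [AddCommMonoid M] {V : ℕ} (hV : 0 < V) (m : ℕ)
    (f : ℕ → M) :
    ∑ d ∈ (V * m).divisors with V ∣ d, f d = ∑ p ∈ m.divisors, f (V * p) := by
  refine (sum_nbij' (V * ·) (· / V) ?_ ?_ ?_ ?_ fun _ _ => rfl).symm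
  · intro p hp
    simp only [mem_filter, Nat.mem_divisors] at hp ⊢
    exact ⟨⟨Nat.mul_dvd_mul_left V hp.1, mul_ne_zero hV.ne' hp.2⟩, dvd_mul_right V p⟩
  · intro d hd
    simp only [mem_filter, Nat.mem_divisors] at hd ⊢
    obtain ⟨⟨hdm, hm⟩, p, rfl⟩ := hd
    rw [Nat.mul_div_cancel_left _ hV]
    exact ⟨Nat.dvd_of_mul_dvd_mul_left hV hdm, right_ne_zero_of_mul hm⟩
  · intro p _
    exact Nat.mul_div_cancel_left _ hV
  · intro d hd
    exact Nat.mul_div_cancel' (mem_filter.1 hd).2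

theorem mul_card_balanced_necklaces [DecidableEq ι] (hgcd : univ.gcd v = 1) (hV : V = ∑ i, v i)
    (m : ℕ) :
    V * m * Nat.card (Quot fun w w' : {w : Fin (V * m) → ι // ∀ i, #{j | w j = i} = v i * m} =>
        rotEquiv w.1 w'.1) =
      ∑ u ∈ m.divisorsAntidiagonal, φ u.1 * Nat.multinomial univ (fun i => v i * u.2) := by
  rcases m.eq_zero_or_pos with rfl | hm
  · simp
  have hV0 := hV ▸ sum_pos_of_gcd_eq_one hgcd
  have : NeZero (V * m) := ⟨by positivity⟩
  rw [mul_card_quot_rotEquiv _ fun r w hw i => (card_filter_rotate r w i).trans (hw i),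
    sum_congr rfl fun d hd => by
      rw [card_periodic_balanced_words hgcd hV hm (Nat.dvd_of_mem_divisors hd)]]
  simp_rw [mul_ite, mul_zero]
  rw [← sum_filter, Nat.sum_divisors_filter_dvd hV0,
    Nat.sum_divisorsAntidiagonal' fun a b => φ a * Nat.multinomial univ fun i => v i * b]
  refine sum_congr rfl fun p _ => ?_
  rw [Nat.mul_div_cancel_left _ hV0, Nat.mul_div_mul_left _ _ hV0]

end Balanced

theorem Nat.multinomial_mul_prod_pow_le {α : Type*} [Fintype α] [DecidableEq α]
    (f x : α → ℕ) :
    Nat.multinomial univ f * ∏ i, x i ^ f i ≤ (∑ i, x i) ^ ∑ i, f i := by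
  rw [sum_pow_eq_sum_piAntidiag]
  exact single_le_sum (f := fun c => (Nat.multinomial univ c : ℕ) * ∏ i, x i ^ c i)
    (fun _ _ => Nat.zero_le _) (mem_piAntidiag.2 ⟨rfl, fun i _ => mem_univ i⟩)

theorem multinomial_mul_pow_le {ι : Type*} [Fintype ι] [DecidableEq ι] {v : ι → ℕ} {V : ℕ}
    (hV : V = ∑ i, v i) {x : ℝ} (hx : 0 ≤ x) (t : ℕ) :
    (Nat.multinomial univ (fun i => v i * t) : ℝ) * x ^ (V * t) ≤
      (x ^ V * V ^ V / ∏ i, (v i : ℝ) ^ v i) ^ t := by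
  have hP : 0 < ∏ i, (v i : ℝ) ^ v i :=
    prod_pos fun i _ => by rcases (v i).eq_zero_or_pos with h | h <;> simp [h]
  have key : (Nat.multinomial univ (fun i => v i * t) : ℝ) * ∏ i, (v i : ℝ) ^ (v i * t) ≤
      (V : ℝ) ^ (V * t) := by
    have := Nat.multinomial_mul_prod_pow_le (fun i => v i * t) v
    rw [← sum_mul, ← hV] at this
    exact_mod_cast this
  rw [div_pow, le_div_iff₀ (pow_pos hP t), ← prod_pow]
  simp only [← pow_mul] at key ⊢
  calc _ = (Nat.multinomial univ (fun i => v i * t) : ℝ) * (∏ i, (v i : ℝ) ^ (v i * t)) *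
        x ^ (V * t) := by ring
    _ ≤ (V : ℝ) ^ (V * t) * x ^ (V * t) := by gcongr
    _ = _ := by rw [mul_pow, ← pow_mul, ← pow_mul]; ring

theorem summable_nat_mul_pow_sub_one {y : ℝ} (hy0 : 0 ≤ y) (hy1 : y < 1) :
    Summable fun n : ℕ => (n : ℝ) * y ^ (n - 1) := by
  rw [← summable_nat_add_iff 1]
  have hy : ‖y‖ < 1 := by rwa [Real.norm_of_nonneg hy0]
  refine ((summable_pow_mul_geometric_of_norm_lt_one 1 hy).add
    (summable_geometric_of_lt_one hy0 hy1)).congr fun n => ?_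
  simp only [pow_one, Nat.cast_add, Nat.cast_one, Nat.add_sub_cancel]
  ring

theorem summable_totient_mul_pow {a : ℕ → ℝ} {x q : ℝ} {V : ℕ} (ha : ∀ t, 0 ≤ a t)
    (hx0 : 0 ≤ x) (hx1 : x < 1) (hV : 0 < V) (hq0 : 0 ≤ q) (hq1 : q < 1)
    (hbound : ∀ t, a t * x ^ (V * t) ≤ q ^ t) :
    Summable fun u : ℕ × ℕ => (φ u.1 : ℝ) * (a (u.2 + 1) * x ^ (V * u.1 * (u.2 + 1))) := by
  have hxV : x ^ V < 1 := pow_lt_one₀ hx0 hx1 hV.ne'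
  have hmajor :
      Summable fun u : ℕ × ℕ => ((u.1 : ℝ) * (x ^ V) ^ (u.1 - 1)) * q ^ (u.2 + 1) :=
    (summable_nat_mul_pow_sub_one (by positivity) hxV).mul_of_nonneg
      ((summable_nat_add_iff 1).2 (summable_geometric_of_lt_one hq0 hq1))
      (fun _ => by positivity) (fun _ => by positivity)
  refine hmajor.of_nonneg_of_le (fun u => mul_nonneg (by positivity)
    (mul_nonneg (ha _) (pow_nonneg hx0 _))) fun ⟨n, p⟩ => ?_
  rcases n with _ | n
  · simp
  have hx_le : x ^ (V * n * (p + 1)) ≤ (x ^ V) ^ n := by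
    rw [← pow_mul]
    exact pow_le_pow_of_le_one hx0 hx1.le (Nat.le_mul_of_pos_right _ p.succ_pos)
  calc (φ (n + 1) : ℝ) * (a (p + 1) * x ^ (V * (n + 1) * (p + 1)))
      = φ (n + 1) * (a (p + 1) * x ^ (V * (p + 1)) * x ^ (V * n * (p + 1))) := by
        rw [mul_assoc (a _), ← pow_add]
        ring_nf
    _ ≤ (n + 1 : ℕ) * (q ^ (p + 1) * (x ^ V) ^ n) := by
        have ha' := ha (p + 1)
        refine mul_le_mul (by exact_mod_cast Nat.totient_le _)
          (mul_le_mul (hbound _) hx_le (by positivity) (by positivity)) (by positivity)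
          (by positivity)
    _ = _ := by rw [Nat.add_sub_cancel]; ring

theorem HasSum.sum_divisorsAntidiagonal_sub_one {α : Type*} [AddCommGroup α] [UniformSpace α]
    [IsUniformAddGroup α] [CompleteSpace α] [T2Space α] {f : ℕ × ℕ → α} {s : α}
    (hf : HasSum f s) (hf0 : ∀ p, f (0, p) = 0) :
    HasSum (fun m : ℕ => ∑ u ∈ m.divisorsAntidiagonal, f (u.1, u.2 - 1)) s := by
  suffices h : (fun m : ℕ => ∑ u ∈ m.divisorsAntidiagonal, f (u.1, u.2 - 1)) =
      fun m => ∑' u : (fun u : ℕ × ℕ => u.1 * (u.2 + 1)) ⁻¹' {m}, f u by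
    rw [h]
    exact hf.tsum_fiberwise _
  ext m
  have hinj : Set.InjOn (fun u : ℕ × ℕ => (u.1, u.2 - 1)) m.divisorsAntidiagonal := by
    rintro ⟨a, b⟩ hab ⟨c, d⟩ hcd h
    simp only [mem_coe, Nat.mem_divisorsAntidiagonal, Prod.mk.injEq] at hab hcd h ⊢
    grind
  have hmem (u : ℕ × ℕ) : u ∈ m.divisorsAntidiagonal.image (fun u => (u.1, u.2 - 1)) ↔
      u.1 * (u.2 + 1) = m ∧ m ≠ 0 := by
    obtain ⟨n, p⟩ := u
    simp only [mem_image, Nat.mem_divisorsAntidiagonal, Prod.mk.injEq, Prod.exists]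
    constructor
    · rintro ⟨a, b, ⟨rfl, hm⟩, rfl, rfl⟩
      have : b ≠ 0 := right_ne_zero_of_mul hm
      exact ⟨by rw [Nat.sub_add_cancel (Nat.one_le_iff_ne_zero.2 this)], hm⟩
    · rintro ⟨rfl, hm⟩
      exact ⟨n, p + 1, ⟨rfl, hm⟩, rfl, rfl⟩
  rw [← sum_image hinj, ← Finset.tsum_subtype', _root_.tsum_subtype, _root_.tsum_subtype]
  congr 1 with ⟨n, p⟩
  classical
  rw [Set.indicator_apply, Set.indicator_apply]
  simp only [mem_coe, hmem, Set.mem_preimage, Set.mem_singleton_iff]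
  split_ifs with h₁ h₂ h₂
  · rfl
  · exact absurd h₁.1 h₂
  · have hm : m = 0 := not_and_not_right.1 h₁ h₂
    obtain rfl : n = 0 := (Nat.mul_eq_zero.1 (h₂.trans hm)).resolve_right p.succ_ne_zero
    rw [hf0]
  · rfl

theorem pointed_v_balanced_cycle_gf_general
    (k : ℕ) (v : Fin k → ℕ)
    (hgcd : Finset.univ.gcd v = 1)
    (V : ℕ) (hV : V = ∑ i, v i)
    (N : ℕ → ℕ)
    (hN : ∀ m : ℕ, N m =
      Nat.card (Quot (fun w w' : {w : Fin (V * m) → Fin k //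
          ∀ i : Fin k, (Finset.univ.filter (fun j => w j = i)).card = v i * m} =>
        rotEquiv w.1 w'.1)))
    (x : ℝ) (hx0 : 0 < x) (hx1 : x < 1)
    (hx : x ^ V * (V : ℝ) ^ V < ∏ i, (v i : ℝ) ^ (v i)) :
    Summable (fun m : ℕ => (V * m * N m : ℝ) * x ^ (V * m)) ∧
    (∀ n : ℕ, 1 ≤ n →
      Summable (fun p : ℕ =>
        ((Nat.factorial (V * (p + 1)) / ∏ i, Nat.factorial (v i * (p + 1)) : ℕ) : ℝ) *
          x ^ (V * n * (p + 1)))) ∧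
    Summable (fun n : ℕ => (Nat.totient n : ℝ) *
      ∑' p : ℕ,
        ((Nat.factorial (V * (p + 1)) / ∏ i, Nat.factorial (v i * (p + 1)) : ℕ) : ℝ) *
          x ^ (V * n * (p + 1))) ∧
    ∑' m : ℕ, (V * m * N m : ℝ) * x ^ (V * m)
      = ∑' n : ℕ, (Nat.totient n : ℝ) *
          ∑' p : ℕ,
            ((Nat.factorial (V * (p + 1)) / ∏ i, Nat.factorial (v i * (p + 1)) : ℕ) : ℝ) *
              x ^ (V * n * (p + 1)) := by
  have hM (t : ℕ) : (V * t)! / ∏ i, (v i * t)! = Nat.multinomial univ fun i => v i * t := by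
    rw [Nat.multinomial, ← sum_mul, ← hV]
  simp only [hM]
  have hq1 : x ^ V * V ^ V / ∏ i, (v i : ℝ) ^ v i < 1 :=
    (div_lt_one ((by positivity : (0 : ℝ) ≤ _).trans_lt hx)).2 hx
  have hb := summable_totient_mul_pow (fun _ => Nat.cast_nonneg _) hx0.le hx1
    (hV ▸ sum_pos_of_gcd_eq_one hgcd) (by positivity) hq1 (multinomial_mul_pow_le hV hx0.le)
  have hfiber (m : ℕ) : ∑ u ∈ m.divisorsAntidiagonal, (φ u.1 : ℝ) *
      ((Nat.multinomial univ fun i => v i * (u.2 - 1 + 1) : ℕ) * x ^ (V * u.1 * (u.2 - 1 + 1))) =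
      (V * m * N m : ℝ) * x ^ (V * m) := by
    have := mul_card_balanced_necklaces hgcd hV m
    rw [← hN] at this
    rw [← Nat.cast_mul, ← Nat.cast_mul, this, Nat.cast_sum, sum_mul]
    refine sum_congr rfl fun u hu => ?_
    obtain ⟨rfl, hm⟩ := Nat.mem_divisorsAntidiagonal.1 hu
    rw [Nat.sub_add_cancel (Nat.one_le_iff_ne_zero.2 (right_ne_zero_of_mul hm)), mul_assoc V]
    push_cast
    ring
  have hsum := hb.hasSum.sum_divisorsAntidiagonal_sub_one fun p => by simp
  simp only [hfiber] at hsum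
  refine ⟨hsum.summable, fun n hn => ?_, ?_, ?_⟩
  · have hφ : (φ n : ℝ) ≠ 0 := by exact_mod_cast (Nat.totient_pos.2 hn).ne'
    exact (summable_mul_left_iff hφ).1 (hb.prod_factor n)
  · simpa only [tsum_mul_left] using hb.prod
  · simp only [hsum.tsum_eq, hb.tsum_prod, tsum_mul_left]

/-- Analytic form of `ΘCyc_v ≅ Σ_{n>0} φ(n) Rep_n(Seq_v)`: with `V = Σ i, v i`,
`gcd v = 1`, and `N m` the number of `v`-balanced necklaces of length `V·m`,
for `0 < x < 1` with `x^V · V^V < ∏ i, (v i)^(v i)` all series below converge and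
`Σ_{m≥1} (V·m) N_m x^{V·m} = Σ_{n≥1} φ(n) Σ_{p≥1} ((V·p)!/∏ i (v i · p)!) x^{V·n·p}`.
(The `m = 0` and `n = 0` terms vanish thanks to the factor `V·m` and `Nat.totient 0 = 0`,
and the inner series is indexed by `p + 1` so it runs over `p ≥ 1`.) -/
theorem pointed_v_balanced_cycle_gf
    (k : ℕ) (hk : 1 ≤ k) (v : Fin k → ℕ) (hv : ∀ i, 1 ≤ v i)
    (hgcd : Finset.univ.gcd v = 1)
    (V : ℕ) (hV : V = ∑ i, v i)
    (N : ℕ → ℕ)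
    (hN : ∀ m : ℕ, N m =
      Nat.card (Quot (fun w w' : {w : Fin (V * m) → Fin k //
          ∀ i : Fin k, (Finset.univ.filter (fun j => w j = i)).card = v i * m} =>
        rotEquiv w.1 w'.1)))
    (x : ℝ) (hx0 : 0 < x) (hx1 : x < 1)
    (hx : x ^ V * (V : ℝ) ^ V < ∏ i, (v i : ℝ) ^ (v i)) :
    Summable (fun m : ℕ => (V * m * N m : ℝ) * x ^ (V * m)) ∧
    (∀ n : ℕ, 1 ≤ n →
      Summable (fun p : ℕ =>
        ((Nat.factorial (V * (p + 1)) / ∏ i, Nat.factorial (v i * (p + 1)) : ℕ) : ℝ) *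
          x ^ (V * n * (p + 1)))) ∧
    Summable (fun n : ℕ => (Nat.totient n : ℝ) *
      ∑' p : ℕ,
        ((Nat.factorial (V * (p + 1)) / ∏ i, Nat.factorial (v i * (p + 1)) : ℕ) : ℝ) *
          x ^ (V * n * (p + 1))) ∧
    ∑' m : ℕ, (V * m * N m : ℝ) * x ^ (V * m)
      = ∑' n : ℕ, (Nat.totient n : ℝ) *
          ∑' p : ℕ,
            ((Nat.factorial (V * (p + 1)) / ∏ i, Nat.factorial (v i * (p + 1)) : ℕ) : ℝ) *
              x ^ (V * n * (p + 1)) :=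
  pointed_v_balanced_cycle_gf_general k v hgcd V hV N hN x hx0 hx1 hx
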